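/- arXiv:1901.11109 — 4 statements merged into one kernel-verified Lean document; each statement's English description precedes it below -/
import Mathlib

section
/- Let K be a commutative ring and A = (a_{i,j}) an (n+1)×(n+1) matrix over K. Then det of the n×n matrix whose (i,j)-entry is a_{i,j}·a_{n+1,n+1} − a_{i,n+1}·a_{n+1,j} equals a_{n+1,n+1}^{n-1} · det A, for n ≥ 1 (Chio pivotal condensation). -/
/-!
Left multiplication by the block matrix `[[a • 1, -c], [0, 1]]`, whose determinant is `aⁿ`, clears
the last column above the pivot `a` and leaves the condensed matrix in the upper left block, so
`a * det B = aⁿ * det A` over any commutative ring. Cancelling `a` is legitimate for the generic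
matrix over `ℤ[xᵢⱼ]`, where the pivot is a nonzero element of a domain, and the identity there
specializes to every matrix over every commutative ring.
-/

open Matrix

namespace Matrix

variable {R : Type*} [CommRing R]

theorem pow_card_mul_det_smul_sub_mul {m o : Type*} [Fintype m] [DecidableEq m] [Fintype o]
    [DecidableEq o] (d : R) (M : Matrix m m R) (c : Matrix m o R) (r : Matrix o m R) :
    d ^ Fintype.card o * det (d • M - c * r)
      = d ^ Fintype.card m * det (fromBlocks M c r (d • 1)) := by
  have clear_column : fromBlocks (d • 1) (-c) 0 1 * fromBlocks M c r (d • 1)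
      = fromBlocks (d • M - c * r) 0 r (d • 1) := by
    simp [fromBlocks_multiply, sub_eq_add_neg, Matrix.neg_mul]
  have := congrArg det clear_column
  rw [det_mul, det_fromBlocks_zero₂₁, det_fromBlocks_zero₁₂] at this
  simpa [det_smul, mul_comm] using this.symm

def chioCondensation {n : ℕ} (A : Matrix (Fin (n + 1)) (Fin (n + 1)) R) :
    Matrix (Fin n) (Fin n) R :=
  of fun i j => A i.castSucc j.castSucc * A (Fin.last n) (Fin.last n)
    - A i.castSucc (Fin.last n) * A (Fin.last n) j.castSucc

theorem pivot_mul_det_chioCondensation {n : ℕ} (A : Matrix (Fin (n + 1)) (Fin (n + 1)) R) :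
    A (Fin.last n) (Fin.last n) * det (chioCondensation A)
      = A (Fin.last n) (Fin.last n) ^ n * det A := by
  set a := A (Fin.last n) (Fin.last n)
  have blocks : A.submatrix finSumFinEquiv finSumFinEquiv
      = fromBlocks (A.submatrix Fin.castSucc Fin.castSucc)
          (replicateCol (Fin 1) fun i => A i.castSucc (Fin.last n))
          (replicateRow (Fin 1) fun j => A (Fin.last n) j.castSucc) (a • 1) := by
    ext (i | i) (j | j) <;> simp [a, Fin.fin_one_eq_zero] <;> rfl
  have condensed : chioCondensation A = a • A.submatrix Fin.castSucc Fin.castSucc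
      - replicateCol (Fin 1) (fun i => A i.castSucc (Fin.last n))
        * replicateRow (Fin 1) fun j => A (Fin.last n) j.castSucc := by
    ext i j
    simp [chioCondensation, mul_apply, mul_comm, a]
  simpa [condensed, ← blocks, det_submatrix_equiv_self] using
    pow_card_mul_det_smul_sub_mul a (A.submatrix Fin.castSucc Fin.castSucc)
      (replicateCol (Fin 1) fun i => A i.castSucc (Fin.last n))
      (replicateRow (Fin 1) fun j => A (Fin.last n) j.castSucc)

theorem det_chioCondensation_of_isLeftRegular {n : ℕ} (hn : 1 ≤ n)
    {A : Matrix (Fin (n + 1)) (Fin (n + 1)) R} (ha : IsLeftRegular (A (Fin.last n) (Fin.last n))) :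
    det (chioCondensation A) = A (Fin.last n) (Fin.last n) ^ (n - 1) * det A := by
  apply ha
  dsimp only
  rw [pivot_mul_det_chioCondensation, ← mul_assoc, ← pow_succ', Nat.sub_add_cancel hn]

theorem chioCondensation_map {S : Type*} [CommRing S] {n : ℕ}
    (A : Matrix (Fin (n + 1)) (Fin (n + 1)) R) (φ : R →+* S) :
    (chioCondensation A).map φ = chioCondensation (A.map φ) := by
  ext i j
  simp [chioCondensation]

end Matrix

/-- Chio pivotal condensation. -/
theorem chio_pivotal_condensation {K : Type*} [CommRing K] (n : ℕ) (hn : 1 ≤ n)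
    (A : Matrix (Fin (n + 1)) (Fin (n + 1)) K) :
    Matrix.det (Matrix.of fun i j : Fin n =>
        A i.castSucc j.castSucc * A (Fin.last n) (Fin.last n)
          - A i.castSucc (Fin.last n) * A (Fin.last n) j.castSucc)
      = A (Fin.last n) (Fin.last n) ^ (n - 1) * A.det := by
  set X := mvPolynomialX (Fin (n + 1)) (Fin (n + 1)) ℤ
  have generic : det (chioCondensation X) = X (Fin.last n) (Fin.last n) ^ (n - 1) * det X :=
    det_chioCondensation_of_isLeftRegular hn (IsRegular.of_ne_zero (MvPolynomial.X_ne_zero _)).left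
  set φ := MvPolynomial.eval₂Hom (Int.castRingHom K)
    fun p : Fin (n + 1) × Fin (n + 1) => A p.1 p.2
  have hXA : X.map φ = A := mvPolynomialX_map_eval₂ (Int.castRingHom K) A
  have hpivot : φ (X (Fin.last n) (Fin.last n)) = A (Fin.last n) (Fin.last n) :=
    MvPolynomial.eval₂Hom_X' _ _ _
  have specialized := congrArg φ generic
  rw [map_mul, map_pow, RingHom.map_det, RingHom.map_det, RingHom.mapMatrix_apply,
    RingHom.mapMatrix_apply, chioCondensation_map, hXA, hpivot] at specialized
  exact specialized
end

section
/- Let K be a commutative ring, and let A be an n×p matrix and B a p×m matrix over K. Let k be a nonnegative integer, P a k-element subset of {1,...,n}, and Q a k-element subset of {1,...,m}. Then det(sub_P^Q(AB)) = Σ_R det(sub_P^R A) · det(sub_R^Q B), where the sum ranges over all k-element subsets R of {1,...,p}. -/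
/-!
Expanding `det (M * N)`, for `M` of size `k × α` and `N` of size `α × k`, by multilinearity
gives a sum over all column selections `f : Fin k → α`, in which the terms with `f`
non-injective cancel. An injective `f` is uniquely the increasing enumeration of a `k`-subset
`R` of `α` composed with an injection `Fin k → Fin k`, and for fixed `R` these terms add up, by
the same expansion, to `det (M_R * N_R) = det M_R * det N_R`. Taking for `M` the rows `P` of
`A` and for `N` the columns `Q` of `B` gives the formula.
-/

open Matrix

/-- The square submatrix of a `u × v` matrix `M` retaining only the rows in `I`
and the columns in `J` (in increasing order), where `|I| = |J| = k`. -/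
noncomputable def subMatrix {K : Type*} {u v k : ℕ} (M : Matrix (Fin u) (Fin v) K)
    (I : Finset (Fin u)) (hI : I.card = k) (J : Finset (Fin v)) (hJ : J.card = k) :
    Matrix (Fin k) (Fin k) K :=
  Matrix.of fun a b => M ((I.orderIsoOfFin hI) a) ((J.orderIsoOfFin hJ) b)

open Finset Equiv
open Function (Injective Bijective)

section DetMulExpansion

variable {K : Type*} [CommRing K] {m n : Type*} [Fintype m] [DecidableEq m]

/-- The summand of the multilinear expansion of `det (M * N)` for the column selection `f`. -/
def detMulTerm (M : Matrix m n K) (N : Matrix n m K) (f : m → n) : K :=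
  ∑ σ : Perm m, (Perm.sign σ : K) * ∏ i, M (σ i) (f i) * N (f i) i

/-- A repeated column index lets the transposition of its two positions cancel terms in pairs. -/
lemma detMulTerm_eq_zero_of_not_injective (M : Matrix m n K) (N : Matrix n m K) {f : m → n}
    (hf : ¬Injective f) : detMulTerm M N f = 0 := by
  obtain ⟨i, j, hfij, hij⟩ : ∃ i j, f i = f j ∧ i ≠ j := by
    simpa only [Injective, not_forall, exists_prop] using hf
  refine sum_involution (fun σ _ => σ * swap i j) (fun σ _ => ?_)
    (fun σ _ _ => (not_congr mul_swap_eq_iff).mpr hij) (fun _ _ => mem_univ _)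
    fun σ _ => mul_swap_involutive i j σ
  have hprod : ∏ x, M (σ x) (f x) = ∏ x, M ((σ * swap i j) x) (f x) :=
    Fintype.prod_equiv (swap i j) _ _ (by simp [apply_swap_eq_self hfij])
  simp [hprod, Perm.sign_swap hij, prod_mul_distrib]

variable [Fintype n]

lemma det_mul_eq_sum_detMulTerm (M : Matrix m n K) (N : Matrix n m K) :
    det (M * N) = ∑ f : m → n, detMulTerm M N f := by
  simp only [detMulTerm, det_apply', mul_apply, prod_univ_sum, mul_sum, Fintype.piFinset_univ]
  exact sum_comm

lemma det_mul_eq_sum_injective_detMulTerm [DecidableEq n] (M : Matrix m n K) (N : Matrix n m K) :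
    det (M * N) = ∑ f : {f : m → n // Injective f}, detMulTerm M N f := by
  rw [det_mul_eq_sum_detMulTerm, ← sum_filter_of_ne (p := Injective),
    sum_subtype _ (p := Injective) (by simp)]
  exact fun f _ hf => by_contra fun hinj => hf (detMulTerm_eq_zero_of_not_injective M N hinj)

end DetMulExpansion

section OrderEmbOfFinComp

variable {α : Type*} [LinearOrder α] {k : ℕ}

def orderEmbOfFinComp :
    {s : Finset α // s.card = k} × {g : Fin k → Fin k // Injective g} →
      {f : Fin k → α // Injective f} :=
  fun x => ⟨x.1.1.orderEmbOfFin x.1.2 ∘ x.2.1,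
    (x.1.1.orderEmbOfFin x.1.2).injective.comp x.2.2⟩

lemma range_orderEmbOfFinComp
    (x : {s : Finset α // s.card = k} × {g : Fin k → Fin k // Injective g}) :
    Set.range (orderEmbOfFinComp x).1 = x.1.1 := by
  obtain ⟨⟨s, hs⟩, ⟨g, hg⟩⟩ := x
  simp only [orderEmbOfFinComp, Set.range_comp, (Finite.injective_iff_surjective.mp hg).range_eq,
    Set.image_univ, range_orderEmbOfFin]

lemma orderEmbOfFinComp_bijective : Bijective (orderEmbOfFinComp (α := α) (k := k)) := by
  refine ⟨fun x y hxy => ?_, fun ⟨f, hf⟩ => ?_⟩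
  · obtain ⟨⟨s, hs⟩, ⟨g, hg⟩⟩ := x
    obtain ⟨⟨t, ht⟩, ⟨h, hh⟩⟩ := y
    have hrange := range_orderEmbOfFinComp (⟨s, hs⟩, ⟨g, hg⟩)
    rw [hxy, range_orderEmbOfFinComp] at hrange
    obtain rfl : s = t := by exact_mod_cast hrange.symm
    obtain rfl : g = h :=
      (s.orderEmbOfFin hs).injective.comp_left (congrArg Subtype.val hxy)
    rfl
  · have hcard : (univ.image f).card = k := by
      rw [card_image_of_injective _ hf, card_univ, Fintype.card_fin]
    let e := (univ.image f).orderIsoOfFin hcard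
    refine ⟨⟨⟨_, hcard⟩, fun a => e.symm ⟨f a, mem_image_of_mem f (mem_univ a)⟩,
      fun a b hab => hf (congrArg Subtype.val (e.symm.injective hab))⟩, ?_⟩
    exact Subtype.ext <| funext fun a => congrArg Subtype.val (e.apply_symm_apply _)

end OrderEmbOfFinComp

theorem det_mul_eq_sum_det_mul_det_submatrix {K α : Type*} [CommRing K] [Fintype α]
    [LinearOrder α] {k : ℕ} (M : Matrix (Fin k) α K) (N : Matrix α (Fin k) K) :
    det (M * N) = ∑ R : {s : Finset α // s.card = k},
      det (M.submatrix id (R.1.orderEmbOfFin R.2)) *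
        det (N.submatrix (R.1.orderEmbOfFin R.2) id) := by
  calc det (M * N) = ∑ f : {f : Fin k → α // Injective f}, detMulTerm M N f :=
        det_mul_eq_sum_injective_detMulTerm M N
    _ = ∑ R : {s : Finset α // s.card = k}, ∑ g : {g : Fin k → Fin k // Injective g},
          detMulTerm M N (orderEmbOfFinComp (R, g)).1 := by
        rw [← Fintype.sum_prod_type']
        exact (Fintype.sum_bijective _ orderEmbOfFinComp_bijective _ (detMulTerm M N ·.1)
          fun _ => rfl).symm
    _ = _ := by
        refine sum_congr rfl fun R _ => ?_
        rw [← det_mul, det_mul_eq_sum_injective_detMulTerm]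
        -- `detMulTerm M N (e ∘ g)` is definitionally `detMulTerm` of the submatrices at `g`
        rfl

/-- Cauchy–Binet formula for minors. -/
theorem cauchy_binet_minors {K : Type*} [CommRing K] (n m p k : ℕ)
    (A : Matrix (Fin n) (Fin p) K) (B : Matrix (Fin p) (Fin m) K)
    (P : Finset (Fin n)) (hP : P.card = k) (Q : Finset (Fin m)) (hQ : Q.card = k) :
    (subMatrix (A * B) P hP Q hQ).det
      = ∑ R : {s : Finset (Fin p) // s.card = k},
          (subMatrix A P hP R.1 R.2).det * (subMatrix B R.1 R.2 Q hQ).det := by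
  have hsub : subMatrix (A * B) P hP Q hQ
      = A.submatrix (P.orderEmbOfFin hP) id * B.submatrix id (Q.orderEmbOfFin hQ) := by
    ext a b
    simp [subMatrix, mul_apply, orderEmbOfFin_apply]
  rw [hsub, det_mul_eq_sum_det_mul_det_submatrix]
  rfl
end

section
/- Let n be a positive integer, and let G = ℤ[a_{i,j} : (i,j) ∈ {1,...,n}²] be the polynomial ring over ℤ in n² indeterminates. Let A be the n×n matrix over G whose (i,j)-entry is the indeterminate a_{i,j}. Then det A is an irreducible element of G. -/
/-!
Substituting `t * X (i, j)` for the variables of one row (or one column) multiplies the generic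
determinant `D` by `t`, so `D` has degree one in the variables of each row and of each column, and
these partial degrees add up in any factorization `D = f * g`. A constant factor is a unit, since
`D` evaluates to `1` at the identity matrix. If neither factor were a unit, `f` would involve some
`X (i, j)` and `g` some `X (k, l)`; the variable `X (k, j)` of `D` then lies in `f` or in `g`, and
either `f` and `g` both involve row `k` or they both involve column `j`.
-/

open Matrix MvPolynomial

namespace MvPolynomial

variable {σ R : Type*}

section CommSemiring

variable [CommSemiring R]

theorem isUnit_of_dvd_of_vars_eq_empty {f p : MvPolynomial σ R} (x : σ → R)
    (hp : IsUnit (eval x p)) (hf : f ∣ p) (hv : f.vars = ∅) : IsUnit f := by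
  rw [vars_eq_empty_iff_eq_C] at hv
  rw [hv] at hf ⊢
  refine (isUnit_of_dvd_unit ?_ hp).map C
  simpa using map_dvd (eval x) hf

variable (s : σ → Prop) [DecidablePred s]

/-- The substitution `X p ↦ t * X p` for the variables `p ∈ s`, where `t` is the variable of the
outer polynomial ring; its `t`-degree is the degree in the variables of `s`. -/
noncomputable def scaleVars : MvPolynomial σ R →+* Polynomial (MvPolynomial σ R) :=
  eval₂Hom (Polynomial.C.comp C) fun p =>
    if s p then Polynomial.X * Polynomial.C (X p) else Polynomial.C (X p)

noncomputable def degreeIn (f : MvPolynomial σ R) : ℕ := (scaleVars s f).natDegree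

theorem evalRingHom_one_comp_scaleVars :
    (Polynomial.evalRingHom 1).comp (scaleVars s) = RingHom.id (MvPolynomial σ R) := by
  refine ringHom_ext (fun r => by simp [scaleVars]) fun p => ?_
  by_cases hp : s p <;> simp [scaleVars, hp]

theorem evalRingHom_zero_comp_scaleVars :
    (Polynomial.evalRingHom 0).comp (scaleVars s) =
      (bind₁ fun p => if s p then 0 else X p : MvPolynomial σ R →ₐ[R] _).toRingHom := by
  refine ringHom_ext (fun r => by simp [scaleVars]) fun p => ?_
  by_cases hp : s p <;> simp [scaleVars, hp]

theorem scaleVars_injective : Function.Injective (scaleVars s : MvPolynomial σ R →+* _) :=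
  Function.LeftInverse.injective (g := Polynomial.evalRingHom 1)
    (RingHom.congr_fun (evalRingHom_one_comp_scaleVars s))

theorem degreeIn_pos_of_mem_vars [Nontrivial R] {f : MvPolynomial σ R} {p : σ}
    (hp : p ∈ f.vars) (hs : s p) : 0 < degreeIn s f := by
  by_contra! h
  -- in degree `0`, setting `t = 1` and `t = 0` agree, so killing the variables of `s` fixes `f`
  have hC : scaleVars s f = Polynomial.C f := by
    have h0 := Polynomial.eq_C_of_natDegree_eq_zero (Nat.le_zero.1 h)
    have h1 := RingHom.congr_fun (evalRingHom_one_comp_scaleVars s) f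
    rw [RingHom.comp_apply, h0, Polynomial.coe_evalRingHom, Polynomial.eval_C] at h1
    rw [h0, h1, RingHom.id_apply]
  have hfix : bind₁ (fun p => if s p then 0 else X p) f = f := by
    simpa [hC] using (RingHom.congr_fun (evalRingHom_zero_comp_scaleVars s) f).symm
  rw [← hfix] at hp
  obtain ⟨q, -, hq⟩ := mem_vars_bind₁ _ f hp
  split_ifs at hq with hsq
  · simp at hq
  · rw [vars_X, Finset.mem_singleton] at hq
    exact hsq (hq ▸ hs)

end CommSemiring

section CommRing

variable [CommRing R] [IsDomain R] (s : σ → Prop) [DecidablePred s]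

theorem degreeIn_mul {f g : MvPolynomial σ R} (h : f * g ≠ 0) :
    degreeIn s (f * g) = degreeIn s f + degreeIn s g := by
  have hinj := scaleVars_injective (R := R) s
  rw [degreeIn, map_mul, Polynomial.natDegree_mul]
  · rfl
  · exact (map_ne_zero_iff _ hinj).2 (left_ne_zero_of_mul h)
  · exact (map_ne_zero_iff _ hinj).2 (right_ne_zero_of_mul h)

theorem degreeIn_eq_zero_of_isUnit {f : MvPolynomial σ R} (hf : IsUnit f) : degreeIn s f = 0 :=
  Polynomial.natDegree_eq_zero_of_isUnit (hf.map _)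

end CommRing

end MvPolynomial

namespace Matrix

variable {n R : Type*} [Fintype n] [DecidableEq n] [CommRing R]

theorem vars_nonempty_of_dvd_det_mvPolynomialX {f : MvPolynomial (n × n) R} (hf : ¬IsUnit f)
    (hdvd : f ∣ (mvPolynomialX n n R).det) : f.vars.Nonempty := by
  refine Finset.nonempty_iff_ne_empty.2 fun hv => hf ?_
  refine isUnit_of_dvd_of_vars_eq_empty (fun p => (1 : Matrix n n R) p.1 p.2) ?_ hdvd hv
  rw [RingHom.map_det, mvPolynomialX_mapMatrix_eval, det_one]
  exact isUnit_one

theorem mem_vars_det_mvPolynomialX [Nontrivial R] (k j : n) :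
    (k, j) ∈ (mvPolynomialX n n R).det.vars := by
  by_contra h
  -- a permutation matrix with a `1` at `(k, j)`; zeroing that entry kills row `k`
  let P : Matrix n n R := (Equiv.swap k j).permMatrix R
  have heval : eval (fun p => P p.1 p.2) (mvPolynomialX n n R).det =
      eval (fun p => P.updateRow k 0 p.1 p.2) (mvPolynomialX n n R).det := by
    refine hom_congr_vars (RingHom.ext fun r => by simp) (fun ⟨a, b⟩ hab _ => ?_) rfl
    by_cases ha : a = k
    · subst ha
      have hb : b ≠ j := fun hb => h (hb ▸ hab)
      simp [P, hb.symm]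
    · simp [updateRow_ne ha]
  rw [RingHom.map_det, RingHom.map_det, mvPolynomialX_mapMatrix_eval,
    mvPolynomialX_mapMatrix_eval, det_permutation, det_eq_zero_of_row_eq_zero k (by simp)] at heval
  exact ((Equiv.Perm.sign _).isUnit.map (Int.castRingHom R)).ne_zero heval

theorem degreeIn_fst_det_mvPolynomialX [Nontrivial R] (i : n) :
    degreeIn (fun p : n × n => p.1 = i) (mvPolynomialX n n R).det = 1 := by
  have hmap : (scaleVars fun p : n × n => p.1 = i).mapMatrix (mvPolynomialX n n R) =
      diagonal (fun a => if a = i then Polynomial.X else 1) *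
        (mvPolynomialX n n R).map Polynomial.C := by
    ext a b : 1
    simp [scaleVars, diagonal_mul, mvPolynomialX_apply, ite_mul]
  rw [degreeIn, RingHom.map_det, hmap, det_mul, det_diagonal, Finset.prod_ite_eq',
    if_pos (Finset.mem_univ _), ← RingHom.mapMatrix_apply, ← RingHom.map_det, mul_comm,
    Polynomial.natDegree_C_mul_X _ (det_mvPolynomialX_ne_zero n R)]

theorem degreeIn_snd_det_mvPolynomialX [Nontrivial R] (j : n) :
    degreeIn (fun p : n × n => p.2 = j) (mvPolynomialX n n R).det = 1 := by
  have hmap : (scaleVars fun p : n × n => p.2 = j).mapMatrix (mvPolynomialX n n R) =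
      (mvPolynomialX n n R).map Polynomial.C *
        diagonal (fun a => if a = j then Polynomial.X else 1) := by
    ext a b : 1
    simp [scaleVars, mul_diagonal, mvPolynomialX_apply, mul_ite]
  rw [degreeIn, RingHom.map_det, hmap, det_mul, det_diagonal, Finset.prod_ite_eq',
    if_pos (Finset.mem_univ _), ← RingHom.mapMatrix_apply, ← RingHom.map_det,
    Polynomial.natDegree_C_mul_X _ (det_mvPolynomialX_ne_zero n R)]

theorem irreducible_det_mvPolynomialX [IsDomain R] [Nonempty n] :
    Irreducible (mvPolynomialX n n R).det := by
  refine ⟨fun hu => ?_, fun f g hfg => ?_⟩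
  · have := degreeIn_eq_zero_of_isUnit (fun p : n × n => p.1 = Classical.arbitrary n) hu
    rw [degreeIn_fst_det_mvPolynomialX] at this
    exact one_ne_zero this
  by_contra! ⟨hf, hg⟩
  obtain ⟨⟨i, j⟩, hij⟩ := vars_nonempty_of_dvd_det_mvPolynomialX hf ⟨g, hfg⟩
  obtain ⟨⟨k, l⟩, hkl⟩ :=
    vars_nonempty_of_dvd_det_mvPolynomialX hg ⟨f, hfg.trans (mul_comm f g)⟩
  have hsplit (s : n × n → Prop) [DecidablePred s] :
      degreeIn s f + degreeIn s g = degreeIn s (mvPolynomialX n n R).det := by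
    rw [hfg, degreeIn_mul s (hfg ▸ det_mvPolynomialX_ne_zero n R)]
  rcases Finset.mem_union.1 (vars_mul f g (hfg ▸ mem_vars_det_mvPolynomialX k j)) with hkj | hkj
  · have hrow := hsplit fun p => p.1 = k
    rw [degreeIn_fst_det_mvPolynomialX] at hrow
    have hf_pos := degreeIn_pos_of_mem_vars (fun p : n × n => p.1 = k) hkj rfl
    have hg_pos := degreeIn_pos_of_mem_vars (fun p : n × n => p.1 = k) hkl rfl
    omega
  · have hcol := hsplit fun p => p.2 = j
    rw [degreeIn_snd_det_mvPolynomialX] at hcol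
    have hf_pos := degreeIn_pos_of_mem_vars (fun p : n × n => p.2 = j) hij rfl
    have hg_pos := degreeIn_pos_of_mem_vars (fun p : n × n => p.2 = j) hkj rfl
    omega

end Matrix

/-- The determinant of the generic `n × n` matrix over `ℤ` is irreducible. -/
theorem det_generic_matrix_irreducible_int (n : ℕ) (hn : 1 ≤ n) :
    Irreducible (Matrix.det (Matrix.of fun i j : Fin n =>
      (MvPolynomial.X (i, j) : MvPolynomial (Fin n × Fin n) ℤ))) :=
  have : Nonempty (Fin n) := ⟨⟨0, hn⟩⟩
  irreducible_det_mvPolynomialX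
end

section
/- Let U be a unique factorization domain, and let p, q ∈ U[x_1,...,x_m] be polynomials each having content 1. Suppose p and q have no indeterminates in common, i.e., there is no i such that both p and q have positive degree in x_i. Then p and q are coprime (their gcd is a unit). -/
/-!
In a domain, degrees in each variable add under multiplication, so every variable of a common
divisor `d` of the nonzero polynomials `p` and `q` occurs in both. Disjoint variables therefore
force `d = C c` to be a constant, and then `c` divides every coefficient of `p`, so it is a unit
because `p` has content `1`.
-/

open MvPolynomial

namespace MvPolynomial

variable {R σ : Type*} [CommSemiring R] {d p : MvPolynomial σ R}

theorem ne_zero_of_forall_dvd_coeff_isUnit [Nontrivial R]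
    (hp : ∀ c : R, (∀ s, c ∣ p.coeff s) → IsUnit c) : p ≠ 0 := by
  rintro rfl
  exact not_isUnit_zero (hp 0 fun _ => dvd_zero _)

variable [NoZeroDivisors R]

theorem degreeOf_le_of_dvd (hd : d ∣ p) (hp : p ≠ 0) (i : σ) : d.degreeOf i ≤ p.degreeOf i := by
  obtain ⟨c, rfl⟩ := hd
  rw [degreeOf_mul_eq (left_ne_zero_of_mul hp) (right_ne_zero_of_mul hp)]
  exact Nat.le_add_right _ _

theorem vars_subset_of_dvd (hd : d ∣ p) (hp : p ≠ 0) : d.vars ⊆ p.vars := fun i hi => by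
  rw [mem_vars_iff_degreeOf_ne_zero] at hi ⊢
  exact Nat.pos_iff_ne_zero.mp ((Nat.pos_of_ne_zero hi).trans_le (degreeOf_le_of_dvd hd hp i))

theorem isRelPrime_of_disjoint_vars {q : MvPolynomial σ R} (hp0 : p ≠ 0) (hq0 : q ≠ 0)
    (hvars : Disjoint p.vars q.vars) (hp : ∀ c : R, (∀ s, c ∣ p.coeff s) → IsUnit c) :
    IsRelPrime p q := by
  intro d hdp hdq
  have hd_const : d = C (d.coeff 0) := by
    rw [← vars_eq_empty_iff_eq_C, Finset.eq_empty_iff_forall_notMem]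
    exact fun i hi => Finset.disjoint_left.mp hvars (vars_subset_of_dvd hdp hp0 hi)
      (vars_subset_of_dvd hdq hq0 hi)
  rw [hd_const] at hdp ⊢
  exact (hp _ ((C_dvd_iff_dvd_coeff _ _).mp hdp)).map C

end MvPolynomial

theorem coprime_of_content_one_disjoint_vars_general
    {U : Type*} [CommRing U] [IsDomain U]
    (m : ℕ) (p q : MvPolynomial (Fin m) U)
    (hp : ∀ d : U, (∀ s, d ∣ p.coeff s) → IsUnit d)
    (hq : ∀ d : U, (∀ s, d ∣ q.coeff s) → IsUnit d)
    (hvars : ¬ ∃ i : Fin m, 0 < p.degreeOf i ∧ 0 < q.degreeOf i) :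
    IsRelPrime p q := by
  refine isRelPrime_of_disjoint_vars (ne_zero_of_forall_dvd_coeff_isUnit hp)
    (ne_zero_of_forall_dvd_coeff_isUnit hq) (Finset.disjoint_left.mpr fun i hip hiq => ?_) hp
  rw [mem_vars_iff_degreeOf_ne_zero] at hip hiq
  exact hvars ⟨i, Nat.pos_of_ne_zero hip, Nat.pos_of_ne_zero hiq⟩

/-- Two polynomials over a UFD, each of content `1`, sharing no indeterminates,
are coprime (every common divisor is a unit). -/
theorem coprime_of_content_one_disjoint_vars
    {U : Type*} [CommRing U] [IsDomain U] [UniqueFactorizationMonoid U]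
    (m : ℕ) (p q : MvPolynomial (Fin m) U)
    (hp : ∀ d : U, (∀ s, d ∣ p.coeff s) → IsUnit d)
    (hq : ∀ d : U, (∀ s, d ∣ q.coeff s) → IsUnit d)
    (hvars : ¬ ∃ i : Fin m, 0 < p.degreeOf i ∧ 0 < q.degreeOf i) :
    IsRelPrime p q :=
  coprime_of_content_one_disjoint_vars_general m p q hp hq hvars
end
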